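/- arXiv:2505.05978 — 2 statements merged into one kernel-verified Lean document; each statement's English description precedes it below -/
import Mathlib

section
/- Let M, D, A be symmetric real N×N matrices with M, A positive definite and D positive semidefinite. For piecewise polynomial u in the dG space (with components in P^{r_n} on each interval I_n of a partition of (0,T]), define A(u,u) = Σ_n [∫_{I_n} (M u''·u' + D u'·u' + A u·u') dt] + Σ_{n=1}^{N-1}(M[u']_n·u'(t_n^+) + A[u]_n·u(t_n^+)) + M u'(0^+)·u'(0^+) + A u(0^+)·u(0^+). Then A(u,u) = Σ_n ∫_{I_n}|D^{1/2}u'|² dt + ½|M^{1/2}u'(0^+)|² + ½Σ_{n=1}^{N-1}|M^{1/2}[u']_n|² + ½|M^{1/2}u'(T^-)|² + ½|A^{1/2}u(0^+)|² + ½Σ_{n=1}^{N-1}|A^{1/2}[u]_n|² + ½|A^{1/2}u(T^-)|², and in particular A(u,u) ≥ 0. -/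
/-!
With `M`, `A` symmetric, `M u''·u' + A u·u'` is the derivative of the energy
`E = ½|M^{1/2}u'|² + ½|A^{1/2}u|²`, so each slab integral equals the damping integral plus
`E(t_n^-) - E(t_{n-1}^+)`. At an interior node, `M[u']·u'^+ = ½|M^{1/2}[u']|² + ½|M^{1/2}u'^+|²
- ½|M^{1/2}u'^-|²`, and likewise for `A`; hence the node energies telescope and only the initial
and final energies survive, each with weight `½`. Every remaining term is a nonnegative quadratic
form.
-/

open Matrix

namespace Matrix

variable {ι R : Type*} [Fintype ι]

theorem IsSymm.dotProduct_mulVec_comm [CommSemiring R] {M : Matrix ι ι R} (hM : M.IsSymm)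
    (x y : ι → R) : x ⬝ᵥ M *ᵥ y = y ⬝ᵥ M *ᵥ x := by
  rw [dotProduct_mulVec, ← mulVec_transpose, hM.eq, dotProduct_comm]

theorem IsSymm.two_mul_mulVec_sub_dotProduct [CommRing R] {M : Matrix ι ι R} (hM : M.IsSymm)
    (a b : ι → R) :
    2 * (M *ᵥ (a - b) ⬝ᵥ a) = (a - b) ⬝ᵥ M *ᵥ (a - b) + a ⬝ᵥ M *ᵥ a - b ⬝ᵥ M *ᵥ b := by
  simp only [mulVec_sub, sub_dotProduct, dotProduct_sub]
  rw [dotProduct_comm (M *ᵥ a), dotProduct_comm (M *ᵥ b), hM.dotProduct_mulVec_comm a b]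
  ring

theorem PosSemidef.dotProduct_mulVec_self_nonneg [CommRing R] [PartialOrder R] [StarRing R]
    [TrivialStar R] {M : Matrix ι ι R} (hM : M.PosSemidef) (x : ι → R) :
    0 ≤ x ⬝ᵥ M *ᵥ x := by
  simpa using hM.dotProduct_mulVec_nonneg x

end Matrix

theorem HasDerivAt.dotProduct_mulVec {𝕜 ι κ : Type*} [NontriviallyNormedField 𝕜] [Fintype ι]
    [Fintype κ] (Q : Matrix ι κ 𝕜) {x : 𝕜 → ι → 𝕜} {y : 𝕜 → κ → 𝕜} {x' : ι → 𝕜} {y' : κ → 𝕜}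
    {s : 𝕜} (hx : HasDerivAt x x' s) (hy : HasDerivAt y y' s) :
    HasDerivAt (fun s => x s ⬝ᵥ Q *ᵥ y s) (x' ⬝ᵥ Q *ᵥ y s + x s ⬝ᵥ Q *ᵥ y') s := by
  have hQy : HasDerivAt (fun s => Q *ᵥ y s) (Q *ᵥ y') s := hasDerivAt_pi.2 fun i => by
    simpa only [mulVec, dotProduct] using
      HasDerivAt.fun_sum fun j _ => (hasDerivAt_pi.1 hy j).const_mul (Q i j)
  simp only [dotProduct, ← Finset.sum_add_distrib]
  exact HasDerivAt.fun_sum fun i _ => (hasDerivAt_pi.1 hx i).mul (hasDerivAt_pi.1 hQy i)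

section Energy

variable {ι : Type*} [Fintype ι]

noncomputable def energy (M A : Matrix ι ι ℝ) (v : ℝ → ι → ℝ) (s : ℝ) : ℝ :=
  (deriv v s ⬝ᵥ M *ᵥ deriv v s + v s ⬝ᵥ A *ᵥ v s) / 2

variable {M A : Matrix ι ι ℝ} {v : ℝ → ι → ℝ}

theorem hasDerivAt_energy (hM : M.IsSymm) (hA : A.IsSymm) (hv : ContDiff ℝ 2 v) (s : ℝ) :
    HasDerivAt (energy M A v)
      (M *ᵥ deriv (deriv v) s ⬝ᵥ deriv v s + A *ᵥ v s ⬝ᵥ deriv v s) s := by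
  obtain ⟨hv₁, -, hv'⟩ := contDiff_succ_iff_deriv (n := 1) |>.1 hv
  have h₁ : HasDerivAt v (deriv v s) s := (hv₁ s).hasDerivAt
  have h₂ : HasDerivAt (deriv v) (deriv (deriv v) s) s :=
    (hv'.differentiable one_ne_zero s).hasDerivAt
  refine (((h₂.dotProduct_mulVec M h₂).add (h₁.dotProduct_mulVec A h₁)).div_const 2).congr_deriv ?_
  rw [hM.dotProduct_mulVec_comm (deriv (deriv v) s), hA.dotProduct_mulVec_comm (v s),
    dotProduct_comm (M *ᵥ _), dotProduct_comm (A *ᵥ _)]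
  ring

theorem integral_dG_integrand_eq (hM : M.IsSymm) (hA : A.IsSymm) (D : Matrix ι ι ℝ)
    (hv : ContDiff ℝ 2 v) (a b : ℝ) :
    ∫ s in a..b, (M *ᵥ deriv (deriv v) s ⬝ᵥ deriv v s + D *ᵥ deriv v s ⬝ᵥ deriv v s
        + A *ᵥ v s ⬝ᵥ deriv v s)
      = (∫ s in a..b, deriv v s ⬝ᵥ D *ᵥ deriv v s) + (energy M A v b - energy M A v a) := by
  have hv' : Continuous (deriv v) := hv.continuous_deriv (by norm_num)
  have hv'' : Continuous (deriv (deriv v)) :=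
    (contDiff_succ_iff_deriv (n := 1) |>.1 hv).2.2.continuous_deriv le_rfl
  have hDv : Continuous fun s => deriv v s ⬝ᵥ D *ᵥ deriv v s :=
    hv'.dotProduct (continuous_const.matrix_mulVec hv')
  have hE : Continuous fun s => M *ᵥ deriv (deriv v) s ⬝ᵥ deriv v s + A *ᵥ v s ⬝ᵥ deriv v s :=
    ((continuous_const.matrix_mulVec hv'').dotProduct hv').add
      ((continuous_const.matrix_mulVec hv.continuous).dotProduct hv')
  rw [← intervalIntegral.integral_eq_sub_of_hasDerivAt
      (fun s _ => hasDerivAt_energy hM hA hv s) (hE.intervalIntegrable a b),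
    ← intervalIntegral.integral_add (hDv.intervalIntegrable a b) (hE.intervalIntegrable a b)]
  refine intervalIntegral.integral_congr fun s _ => ?_
  simp only [dotProduct_comm (D *ᵥ _)]
  ring

end Energy

theorem Finset.sum_range_sub_add_sum_Ico_sub_add {G : Type*} [AddCommGroup G] (F : ℕ → ℕ → G)
    (N : ℕ) :
    ∑ n ∈ range N, (F n (n + 1) - F n n) + ∑ n ∈ Ico 1 N, (F n n - F (n - 1) n) + F 0 0
      = F (N - 1) N := by
  induction N with
  | zero => simp
  | succ N ih =>
    rcases Nat.eq_zero_or_pos N with rfl | hN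
    · simp
    · rw [sum_range_succ, sum_Ico_succ_top hN, ← ih, Nat.add_sub_cancel]
      abel

section dGForm

variable {ι : Type*} [Fintype ι]

/-- The dG2 form `𝒜(u, u)`: the slab `(t n, t (n + 1)]` carries the piece `u n`, so
`u(t_n^+) = u n (t n)` and `u(t_n^-) = u (n - 1) (t n)`. -/
noncomputable def dGForm (M D A : Matrix ι ι ℝ) (t : ℕ → ℝ) (N : ℕ) (u : ℕ → ℝ → ι → ℝ) : ℝ :=
  (∑ n ∈ Finset.range N, ∫ s in (t n)..(t (n + 1)),
      (M *ᵥ deriv (deriv (u n)) s ⬝ᵥ deriv (u n) s + D *ᵥ deriv (u n) s ⬝ᵥ deriv (u n) s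
        + A *ᵥ u n s ⬝ᵥ deriv (u n) s))
    + (∑ n ∈ Finset.Ico 1 N,
      (M *ᵥ (deriv (u n) (t n) - deriv (u (n - 1)) (t n)) ⬝ᵥ deriv (u n) (t n)
        + A *ᵥ (u n (t n) - u (n - 1) (t n)) ⬝ᵥ u n (t n)))
    + M *ᵥ deriv (u 0) (t 0) ⬝ᵥ deriv (u 0) (t 0)
    + A *ᵥ u 0 (t 0) ⬝ᵥ u 0 (t 0)

noncomputable def dGSeminormSq (M D A : Matrix ι ι ℝ) (t : ℕ → ℝ) (N : ℕ)
    (u : ℕ → ℝ → ι → ℝ) : ℝ :=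
  (∑ n ∈ Finset.range N, ∫ s in (t n)..(t (n + 1)), deriv (u n) s ⬝ᵥ D *ᵥ deriv (u n) s)
    + (1 / 2) * (deriv (u 0) (t 0) ⬝ᵥ M *ᵥ deriv (u 0) (t 0))
    + (1 / 2) * ∑ n ∈ Finset.Ico 1 N,
      (deriv (u n) (t n) - deriv (u (n - 1)) (t n)) ⬝ᵥ
        M *ᵥ (deriv (u n) (t n) - deriv (u (n - 1)) (t n))
    + (1 / 2) * (deriv (u (N - 1)) (t N) ⬝ᵥ M *ᵥ deriv (u (N - 1)) (t N))
    + (1 / 2) * (u 0 (t 0) ⬝ᵥ A *ᵥ u 0 (t 0))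
    + (1 / 2) * ∑ n ∈ Finset.Ico 1 N,
      (u n (t n) - u (n - 1) (t n)) ⬝ᵥ A *ᵥ (u n (t n) - u (n - 1) (t n))
    + (1 / 2) * (u (N - 1) (t N) ⬝ᵥ A *ᵥ u (N - 1) (t N))

variable {M D A : Matrix ι ι ℝ} {t : ℕ → ℝ} {N : ℕ} {u : ℕ → ℝ → ι → ℝ}

theorem dGForm_eq_dGSeminormSq (hM : M.IsSymm) (hA : A.IsSymm) (hu : ∀ n, ContDiff ℝ 2 (u n)) :
    dGForm M D A t N u = dGSeminormSq M D A t N u := by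
  have hnode (n : ℕ) :
      M *ᵥ (deriv (u n) (t n) - deriv (u (n - 1)) (t n)) ⬝ᵥ deriv (u n) (t n)
        + A *ᵥ (u n (t n) - u (n - 1) (t n)) ⬝ᵥ u n (t n)
      = (1 / 2) * ((deriv (u n) (t n) - deriv (u (n - 1)) (t n)) ⬝ᵥ
            M *ᵥ (deriv (u n) (t n) - deriv (u (n - 1)) (t n)))
        + (1 / 2) * ((u n (t n) - u (n - 1) (t n)) ⬝ᵥ A *ᵥ (u n (t n) - u (n - 1) (t n)))
        + (energy M A (u n) (t n) - energy M A (u (n - 1)) (t n)) := by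
    have hjumpM := hM.two_mul_mulVec_sub_dotProduct (deriv (u n) (t n)) (deriv (u (n - 1)) (t n))
    have hjumpA := hA.two_mul_mulVec_sub_dotProduct (u n (t n)) (u (n - 1) (t n))
    simp only [energy]
    linarith
  have hinit : M *ᵥ deriv (u 0) (t 0) ⬝ᵥ deriv (u 0) (t 0) + A *ᵥ u 0 (t 0) ⬝ᵥ u 0 (t 0)
      = (1 / 2) * (deriv (u 0) (t 0) ⬝ᵥ M *ᵥ deriv (u 0) (t 0))
        + (1 / 2) * (u 0 (t 0) ⬝ᵥ A *ᵥ u 0 (t 0)) + energy M A (u 0) (t 0) := by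
    simp only [energy, dotProduct_comm (M *ᵥ _), dotProduct_comm (A *ᵥ _)]
    ring
  have htelescope :=
    Finset.sum_range_sub_add_sum_Ico_sub_add (fun m k => energy M A (u m) (t k)) N
  rw [dGForm, dGSeminormSq,
    Finset.sum_congr rfl fun n _ => integral_dG_integrand_eq hM hA D (hu n) (t n) (t (n + 1)),
    Finset.sum_congr rfl fun n _ => hnode n]
  simp only [Finset.sum_add_distrib, ← Finset.mul_sum] at htelescope ⊢
  simp only [energy] at htelescope hinit ⊢
  linarith

theorem dGSeminormSq_nonneg (hM : M.PosSemidef) (hD : D.PosSemidef) (hA : A.PosSemidef)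
    (ht : ∀ n < N, t n ≤ t (n + 1)) : 0 ≤ dGSeminormSq M D A t N u := by
  have hslab : 0 ≤ ∑ n ∈ Finset.range N, ∫ s in (t n)..(t (n + 1)),
      deriv (u n) s ⬝ᵥ D *ᵥ deriv (u n) s :=
    Finset.sum_nonneg fun n hn => intervalIntegral.integral_nonneg (ht n (Finset.mem_range.1 hn))
      fun s _ => hD.dotProduct_mulVec_self_nonneg _
  unfold dGSeminormSq
  apply_rules [hslab, one_half_pos.le, add_nonneg, mul_nonneg, hM.dotProduct_mulVec_self_nonneg,
    hA.dotProduct_mulVec_self_nonneg,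
    Finset.sum_nonneg fun _ _ => hM.dotProduct_mulVec_self_nonneg _,
    Finset.sum_nonneg fun _ _ => hA.dotProduct_mulVec_self_nonneg _]

end dGForm

theorem stmt3_general (d N : ℕ) (t : ℕ → ℝ)
    (hmono : ∀ n < N, t n < t (n + 1))
    (M D A : Matrix (Fin d) (Fin d) ℝ)
    (hM : M.PosDef) (hA : A.PosDef) (hD : D.PosSemidef)
    (r : ℕ → ℕ) (u : ℕ → ℝ → Fin d → ℝ)
    (hu : ∀ n, ∃ p : Fin d → Polynomial ℝ,
      (∀ i, (p i).natDegree ≤ r n) ∧ ∀ s i, u n s i = (p i).eval s) :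
    (∑ n ∈ Finset.range N, ∫ s in (t n)..(t (n + 1)),
          (M.mulVec (deriv (deriv (u n)) s) ⬝ᵥ deriv (u n) s
            + D.mulVec (deriv (u n) s) ⬝ᵥ deriv (u n) s
            + A.mulVec (u n s) ⬝ᵥ deriv (u n) s))
      + (∑ n ∈ Finset.Ico 1 N,
          (M.mulVec (deriv (u n) (t n) - deriv (u (n - 1)) (t n)) ⬝ᵥ deriv (u n) (t n)
            + A.mulVec (u n (t n) - u (n - 1) (t n)) ⬝ᵥ u n (t n)))
      + M.mulVec (deriv (u 0) (t 0)) ⬝ᵥ deriv (u 0) (t 0)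
      + A.mulVec (u 0 (t 0)) ⬝ᵥ u 0 (t 0)
    = (∑ n ∈ Finset.range N, ∫ s in (t n)..(t (n + 1)),
          deriv (u n) s ⬝ᵥ D.mulVec (deriv (u n) s))
      + (1 / 2) * (deriv (u 0) (t 0) ⬝ᵥ M.mulVec (deriv (u 0) (t 0)))
      + (1 / 2) * ∑ n ∈ Finset.Ico 1 N,
          (deriv (u n) (t n) - deriv (u (n - 1)) (t n)) ⬝ᵥ
            M.mulVec (deriv (u n) (t n) - deriv (u (n - 1)) (t n))
      + (1 / 2) * (deriv (u (N - 1)) (t N) ⬝ᵥ M.mulVec (deriv (u (N - 1)) (t N)))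
      + (1 / 2) * (u 0 (t 0) ⬝ᵥ A.mulVec (u 0 (t 0)))
      + (1 / 2) * ∑ n ∈ Finset.Ico 1 N,
          (u n (t n) - u (n - 1) (t n)) ⬝ᵥ A.mulVec (u n (t n) - u (n - 1) (t n))
      + (1 / 2) * (u (N - 1) (t N) ⬝ᵥ A.mulVec (u (N - 1) (t N)))
    ∧ 0 ≤ (∑ n ∈ Finset.range N, ∫ s in (t n)..(t (n + 1)),
          (M.mulVec (deriv (deriv (u n)) s) ⬝ᵥ deriv (u n) s
            + D.mulVec (deriv (u n) s) ⬝ᵥ deriv (u n) s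
            + A.mulVec (u n s) ⬝ᵥ deriv (u n) s))
      + (∑ n ∈ Finset.Ico 1 N,
          (M.mulVec (deriv (u n) (t n) - deriv (u (n - 1)) (t n)) ⬝ᵥ deriv (u n) (t n)
            + A.mulVec (u n (t n) - u (n - 1) (t n)) ⬝ᵥ u n (t n)))
      + M.mulVec (deriv (u 0) (t 0)) ⬝ᵥ deriv (u 0) (t 0)
      + A.mulVec (u 0 (t 0)) ⬝ᵥ u 0 (t 0) := by
  have hMs : M.IsSymm := isHermitian_iff_isSymm.1 hM.1
  have hAs : A.IsSymm := isHermitian_iff_isSymm.1 hA.1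
  have hsmooth (n : ℕ) : ContDiff ℝ 2 (u n) := by
    obtain ⟨p, -, hp⟩ := hu n
    rw [show u n = fun s i => (p i).eval s from funext fun s => funext (hp s)]
    exact contDiff_pi.2 fun i => by simpa using (p i).contDiff_aeval (R := ℝ) (𝕜 := ℝ) 2
  have hid : dGForm M D A t N u = dGSeminormSq M D A t N u :=
    dGForm_eq_dGSeminormSq hMs hAs hsmooth
  exact ⟨hid, (dGSeminormSq_nonneg hM.posSemidef hD hA.posSemidef
    fun n hn => (hmono n hn).le).trans hid.ge⟩

/-- The dG2 bilinear form evaluated on the diagonal equals the energy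
seminorm.  The slab `I_n = (t n, t (n+1)]` carries the polynomial piece
`u n`; `u(t_n^+) = u n (t n)`, `u(t_n^-) = u (n-1) (t n)`, `u(T^-) =
u (N-1) (t N)`.  Note that `|M^{1/2} y|² = y ⬝ᵥ M y` and the integrand
`|D^{1/2} u'|² = u' ⬝ᵥ D u'`. -/
theorem stmt3 (d N : ℕ) (hN : 1 ≤ N) (t : ℕ → ℝ)
    (hmono : ∀ n < N, t n < t (n + 1))
    (M D A : Matrix (Fin d) (Fin d) ℝ)
    (hM : M.PosDef) (hA : A.PosDef) (hD : D.PosSemidef)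
    (r : ℕ → ℕ) (u : ℕ → ℝ → Fin d → ℝ)
    (hu : ∀ n, ∃ p : Fin d → Polynomial ℝ,
      (∀ i, (p i).natDegree ≤ r n) ∧ ∀ s i, u n s i = (p i).eval s) :
    (∑ n ∈ Finset.range N, ∫ s in (t n)..(t (n + 1)),
          (M.mulVec (deriv (deriv (u n)) s) ⬝ᵥ deriv (u n) s
            + D.mulVec (deriv (u n) s) ⬝ᵥ deriv (u n) s
            + A.mulVec (u n s) ⬝ᵥ deriv (u n) s))
      + (∑ n ∈ Finset.Ico 1 N,
          (M.mulVec (deriv (u n) (t n) - deriv (u (n - 1)) (t n)) ⬝ᵥ deriv (u n) (t n)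
            + A.mulVec (u n (t n) - u (n - 1) (t n)) ⬝ᵥ u n (t n)))
      + M.mulVec (deriv (u 0) (t 0)) ⬝ᵥ deriv (u 0) (t 0)
      + A.mulVec (u 0 (t 0)) ⬝ᵥ u 0 (t 0)
    = (∑ n ∈ Finset.range N, ∫ s in (t n)..(t (n + 1)),
          deriv (u n) s ⬝ᵥ D.mulVec (deriv (u n) s))
      + (1 / 2) * (deriv (u 0) (t 0) ⬝ᵥ M.mulVec (deriv (u 0) (t 0)))
      + (1 / 2) * ∑ n ∈ Finset.Ico 1 N,
          (deriv (u n) (t n) - deriv (u (n - 1)) (t n)) ⬝ᵥ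
            M.mulVec (deriv (u n) (t n) - deriv (u (n - 1)) (t n))
      + (1 / 2) * (deriv (u (N - 1)) (t N) ⬝ᵥ M.mulVec (deriv (u (N - 1)) (t N)))
      + (1 / 2) * (u 0 (t 0) ⬝ᵥ A.mulVec (u 0 (t 0)))
      + (1 / 2) * ∑ n ∈ Finset.Ico 1 N,
          (u n (t n) - u (n - 1) (t n)) ⬝ᵥ A.mulVec (u n (t n) - u (n - 1) (t n))
      + (1 / 2) * (u (N - 1) (t N) ⬝ᵥ A.mulVec (u (N - 1) (t N)))
    ∧ 0 ≤ (∑ n ∈ Finset.range N, ∫ s in (t n)..(t (n + 1)),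
          (M.mulVec (deriv (deriv (u n)) s) ⬝ᵥ deriv (u n) s
            + D.mulVec (deriv (u n) s) ⬝ᵥ deriv (u n) s
            + A.mulVec (u n s) ⬝ᵥ deriv (u n) s))
      + (∑ n ∈ Finset.Ico 1 N,
          (M.mulVec (deriv (u n) (t n) - deriv (u (n - 1)) (t n)) ⬝ᵥ deriv (u n) (t n)
            + A.mulVec (u n (t n) - u (n - 1) (t n)) ⬝ᵥ u n (t n)))
      + M.mulVec (deriv (u 0) (t 0)) ⬝ᵥ deriv (u 0) (t 0)
      + A.mulVec (u 0 (t 0)) ⬝ᵥ u 0 (t 0) :=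
  stmt3_general d N t hmono M D A hM hA hD r u hu
end

section
/- Let {ψ^1, ..., ψ^{r+1}} be a basis of P^r(a,b] and define (L₁)_{ℓm} = ∫_a^b ψ̇^m ψ^ℓ dt and (L₃)_{ℓm} = ψ^m(a^+)ψ^ℓ(a^+). Then L₁ + L₃ is invertible. Equivalently: if p ∈ P^r satisfies ∫_a^b ṗ(t) q(t) dt + p(a) q(a) = 0 for all q ∈ P^r, then p = 0. -/
/-!
Testing the form `B(p, q) = ∫_a^b ṗ q + p(a) q(a)` with `q = p` gives
`B(p, p) = (p(a)² + p(b)²) / 2`, so `p(a) = 0`; testing with `q = ṗ` then gives `∫_a^b ṗ² = 0`,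
so `p` is constant, hence zero. The matrix `L₁ + L₃` is the Gram matrix of `B` in the basis `ψ`,
and a Gram matrix is invertible as soon as the form is left-nondegenerate on the span of the basis.
-/

open Polynomial

section GramMatrix

variable {K M ι : Type*} [Field K] [AddCommGroup M] [Module K M] [Fintype ι] [DecidableEq ι]

theorem Matrix.isUnit_of_nondegenerate_on_span (B : M →ₗ[K] M →ₗ[K] K) {ψ : ι → M}
    (hψ : LinearIndependent K ψ)
    (hB : ∀ p ∈ Submodule.span K (Set.range ψ),
      (∀ q ∈ Submodule.span K (Set.range ψ), B p q = 0) → p = 0) :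
    IsUnit (Matrix.of fun ℓ m => B (ψ m) (ψ ℓ)) := by
  rw [← mulVec_injective_iff_isUnit]
  refine (injective_iff_map_eq_zero (Matrix.mulVecLin _)).2 fun v hv => ?_
  set p := ∑ m, v m • ψ m
  have hp : p ∈ Submodule.span K (Set.range ψ) :=
    Submodule.sum_mem _ fun m _ => Submodule.smul_mem _ _ (Submodule.subset_span ⟨m, rfl⟩)
  have hBψ : ∀ ℓ, B p (ψ ℓ) = 0 := fun ℓ => by
    simpa [p, mulVec, dotProduct, mul_comm] using congrFun hv ℓ
  have hBspan : Submodule.span K (Set.range ψ) ≤ LinearMap.ker (B p) :=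
    Submodule.span_le.2 (Set.range_subset_iff.2 hBψ)
  exact funext <| Fintype.linearIndependent_iff.mp hψ v (hB p hp fun q hq => hBspan hq)

end GramMatrix

theorem Polynomial.mem_degreeLT_succ_iff {R : Type*} [Semiring R] {p : R[X]} {n : ℕ} :
    p ∈ degreeLT R (n + 1) ↔ p.natDegree ≤ n := by
  rw [degreeLT_succ_eq_degreeLE, mem_degreeLE, natDegree_le_iff_degree_le]

theorem Polynomial.span_eq_degreeLT_of_linearIndependent {K : Type*} [Field K] {n : ℕ}
    {ψ : Fin n → K[X]} (hdeg : ∀ i, ψ i ∈ degreeLT K n) (hψ : LinearIndependent K ψ) :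
    Submodule.span K (Set.range ψ) = degreeLT K n :=
  Submodule.eq_of_le_of_finrank_eq (Submodule.span_le.2 (Set.range_subset_iff.2 hdeg)) <| by
    rw [finrank_span_eq_card hψ, Module.finrank_eq_card_basis (degreeLT.basis K n)]

namespace Polynomial

open intervalIntegral

theorem intervalIntegrable_eval_mul_eval (p q : ℝ[X]) (a b : ℝ) :
    IntervalIntegrable (fun s => p.eval s * q.eval s) MeasureTheory.volume a b :=
  (p.continuous.mul q.continuous).intervalIntegrable a b

noncomputable def dGTimeForm (a b : ℝ) : ℝ[X] →ₗ[ℝ] ℝ[X] →ₗ[ℝ] ℝ :=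
  LinearMap.mk₂ ℝ (fun p q => (∫ s in a..b, p.derivative.eval s * q.eval s) + p.eval a * q.eval a)
    (fun p₁ p₂ q => by
      simp only [derivative_add, eval_add, add_mul]
      rw [integral_add (intervalIntegrable_eval_mul_eval _ _ a b)
        (intervalIntegrable_eval_mul_eval _ _ a b)]
      ring)
    (fun c p q => by
      simp only [derivative_smul, eval_smul, smul_eq_mul, mul_assoc, integral_const_mul]
      ring)
    (fun p q₁ q₂ => by
      simp only [eval_add, mul_add]
      rw [integral_add (intervalIntegrable_eval_mul_eval _ _ a b)
        (intervalIntegrable_eval_mul_eval _ _ a b)]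
      ring)
    (fun c p q => by
      simp only [eval_smul, smul_eq_mul, mul_left_comm _ c, integral_const_mul]
      ring)

theorem dGTimeForm_apply (a b : ℝ) (p q : ℝ[X]) :
    dGTimeForm a b p q = (∫ s in a..b, p.derivative.eval s * q.eval s) + p.eval a * q.eval a :=
  rfl

theorem integral_derivative_mul_self (p : ℝ[X]) (a b : ℝ) :
    ∫ s in a..b, p.derivative.eval s * p.eval s = (p.eval b ^ 2 - p.eval a ^ 2) / 2 := by
  have hderiv : ∀ x ∈ Set.uIcc a b,
      HasDerivAt (fun x => p.eval x ^ 2 / 2) (p.derivative.eval x * p.eval x) x := fun x _ =>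
    (((p.hasDerivAt x).pow 2).div_const 2).congr_deriv (by ring)
  rw [integral_eq_sub_of_hasDerivAt hderiv (intervalIntegrable_eval_mul_eval _ _ a b)]
  ring

theorem dGTimeForm_self (p : ℝ[X]) (a b : ℝ) :
    dGTimeForm a b p p = (p.eval a ^ 2 + p.eval b ^ 2) / 2 := by
  rw [dGTimeForm_apply, integral_derivative_mul_self]
  ring

theorem eq_zero_of_integral_mul_self_eq_zero {p : ℝ[X]} {a b : ℝ} (hab : a < b)
    (h : ∫ s in a..b, p.eval s * p.eval s = 0) : p = 0 := by
  by_contra hp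
  obtain ⟨c, hc, hpc⟩ := (Set.Ioo_infinite hab).exists_notMem_finite (finite_setOfPred_isRoot hp)
  refine h.not_gt (integral_pos hab (p.continuous.mul p.continuous).continuousOn
    (fun x _ => mul_self_nonneg _) ⟨c, Set.Ioo_subset_Icc_self hc, ?_⟩)
  exact mul_self_pos.2 hpc

theorem eq_zero_of_dGTimeForm_eq_zero {p : ℝ[X]} {a b : ℝ}
    (hab : a < b) (hpp : dGTimeForm a b p p = 0) (hpp' : dGTimeForm a b p p.derivative = 0) :
    p = 0 := by
  have hpa : p.eval a = 0 := by
    rw [dGTimeForm_self] at hpp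
    nlinarith [sq_nonneg (p.eval a), sq_nonneg (p.eval b)]
  have hp' : p.derivative = 0 := by
    rw [dGTimeForm_apply, hpa, zero_mul, add_zero] at hpp'
    exact eq_zero_of_integral_mul_self_eq_zero hab hpp'
  rw [eq_C_of_natDegree_eq_zero (derivative_eq_zero.1 hp')] at hpa ⊢
  simpa using hpa

end Polynomial

/-- Invertibility of the local dG1 time matrix `L₁ + L₃`, where
`(L₁)_{ℓm} = ∫_a^b ψ̇^m ψ^ℓ` and `(L₃)_{ℓm} = ψ^m(a) ψ^ℓ(a)` for a basis
`ψ^1, …, ψ^{r+1}` of `P^r(a,b]`; equivalently, a polynomial `p` of degree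
at most `r` with `∫_a^b ṗ q + p(a) q(a) = 0` for all `q` of degree at most
`r` vanishes. -/
theorem stmt13 (r : ℕ) (a b : ℝ) (hab : a < b)
    (ψ : Fin (r + 1) → Polynomial ℝ)
    (hdeg : ∀ i, (ψ i).natDegree ≤ r)
    (hind : LinearIndependent ℝ ψ)
    (L₁ L₃ : Matrix (Fin (r + 1)) (Fin (r + 1)) ℝ)
    (hL₁ : L₁ = Matrix.of fun ℓ m =>
      ∫ s in a..b, (ψ m).derivative.eval s * (ψ ℓ).eval s)
    (hL₃ : L₃ = Matrix.of fun ℓ m => (ψ m).eval a * (ψ ℓ).eval a) :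
    IsUnit (L₁ + L₃)
      ∧ ∀ p : Polynomial ℝ, p.natDegree ≤ r →
          (∀ q : Polynomial ℝ, q.natDegree ≤ r →
            (∫ s in a..b, p.derivative.eval s * q.eval s)
              + p.eval a * q.eval a = 0) →
          p = 0 := by
  have hcoercive : ∀ p : ℝ[X], p.natDegree ≤ r →
      (∀ q : ℝ[X], q.natDegree ≤ r → dGTimeForm a b p q = 0) → p = 0 := fun p hp h =>
    eq_zero_of_dGTimeForm_eq_zero hab (h p hp)
      (h _ ((natDegree_derivative_le p).trans ((Nat.sub_le _ _).trans hp)))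
  have hgram : L₁ + L₃ = Matrix.of fun ℓ m => dGTimeForm a b (ψ m) (ψ ℓ) := by
    subst hL₁ hL₃
    rfl
  have hspan : Submodule.span ℝ (Set.range ψ) = degreeLT ℝ (r + 1) :=
    span_eq_degreeLT_of_linearIndependent (fun i => mem_degreeLT_succ_iff.2 (hdeg i)) hind
  refine ⟨?_, hcoercive⟩
  rw [hgram]
  refine Matrix.isUnit_of_nondegenerate_on_span _ hind fun p hp h => ?_
  rw [hspan] at hp h
  exact hcoercive p (mem_degreeLT_succ_iff.1 hp) fun q hq => h q (mem_degreeLT_succ_iff.2 hq)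
end
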